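/- arXiv:2403.16670 — 2 statements merged into one kernel-verified Lean document; each statement's English description precedes it below -/
import Mathlib

section
/- For all nonnegative integers m and n and all real x, y, the bivariate Bell polynomials satisfy φ_{m+n}(x,y) = Σ_{k=0}^{n} Σ_{j=0}^{m} C(m,j) · φ_j(x−k, y) · (x)_k · y^k · {n brace k} · k^{m−j}, where {n brace k} is the Stirling number of the second kind (with the convention 0^0 = 1). -/
open Finset

noncomputable section

/-- The falling factorial `(x)_k = x (x-1) ⋯ (x-k+1)`. -/
def fallFac (x : ℝ) (k : ℕ) : ℝ := ∏ i ∈ Finset.range k, (x - (i : ℝ))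

/-- The Stirling numbers of the second kind
`{n brace k} = (1/k!) ∑_{i=0}^{k} C(k,i) (−1)^{k−i} i^n` (with `0^0 = 1`). -/
def stirling2 (n k : ℕ) : ℝ :=
  ((k.factorial : ℝ))⁻¹ *
    ∑ i ∈ Finset.range (k + 1), (k.choose i : ℝ) * (-1) ^ (k - i) * (i : ℝ) ^ n

/-- The bivariate Bell polynomials `φ_n(x,y) = ∑_{k=0}^{n} {n brace k} (x)_k y^k`. -/
def phiBiv (n : ℕ) (x y : ℝ) : ℝ :=
  ∑ k ∈ Finset.range (n + 1), stirling2 n k * fallFac x k * y ^ k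

lemma stirling2_eq (n k : ℕ) :
    stirling2 n k = ((k.factorial : ℝ))⁻¹ * (-1) ^ k *
      ∑ i ∈ Finset.range (k + 1), (k.choose i : ℝ) * (-1) ^ i * (i : ℝ) ^ n := by
  have key : ∑ i ∈ Finset.range (k + 1), (k.choose i : ℝ) * (-1) ^ (k - i) * (i : ℝ) ^ n
      = (-1 : ℝ) ^ k * ∑ i ∈ Finset.range (k + 1), (k.choose i : ℝ) * (-1) ^ i * (i : ℝ) ^ n := by
    rw [Finset.mul_sum]
    refine Finset.sum_congr rfl fun i hi => ?_
    have hik : i ≤ k := Nat.lt_succ_iff.mp (Finset.mem_range.mp hi)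
    have h1 : ((-1 : ℝ)) ^ (k - i) * (-1) ^ i = (-1) ^ k := by
      rw [← pow_add, Nat.sub_add_cancel hik]
    have hsq : ((-1 : ℝ)) ^ i * (-1) ^ i = 1 := by
      rw [← pow_add, ← two_mul, pow_mul]; norm_num
    have h2 : ((-1 : ℝ)) ^ (k - i) = (-1) ^ k * (-1) ^ i :=
      calc ((-1 : ℝ)) ^ (k - i) = (-1) ^ (k - i) * ((-1) ^ i * (-1) ^ i) := by rw [hsq, mul_one]
        _ = (-1) ^ k * (-1) ^ i := by rw [← mul_assoc, h1]
    rw [h2]; ring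
  rw [stirling2, key]; ring

lemma stirling2_zero_zero : stirling2 0 0 = 1 := by
  simp [stirling2]

lemma stirling2_zero_succ (k : ℕ) : stirling2 0 (k + 1) = 0 := by
  rw [stirling2_eq]
  have key : ∑ i ∈ Finset.range (k + 1 + 1), ((k+1).choose i : ℝ) * (-1) ^ i * (i : ℝ) ^ 0
      = ((∑ i ∈ Finset.range (k + 1 + 1), (-1) ^ i * ((k+1).choose i : ℤ) : ℤ) : ℝ) := by
    push_cast
    refine Finset.sum_congr rfl fun i _ => by ring
  rw [key, Int.alternating_sum_range_choose, if_neg (Nat.succ_ne_zero k)]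
  simp

lemma stirling2_succ_zero (n : ℕ) : stirling2 (n + 1) 0 = 0 := by
  simp [stirling2]

lemma choose_nat_id (k i : ℕ) :
    (k + 1) * k.choose i = (k + 1 - i) * (k+1).choose i := by
  calc (k+1) * k.choose i = (k+1).choose (i+1) * (i+1) := Nat.add_one_mul_choose_eq k i
    _ = (k+1).choose i * (k+1-i) := Nat.choose_succ_right_eq (k+1) i
    _ = (k+1-i) * (k+1).choose i := Nat.mul_comm _ _

lemma choose_cast_id (k i : ℕ) (h : i ≤ k + 1) :
    ((i : ℝ) - (k + 1)) * ((k+1).choose i : ℝ) = -((k+1) : ℝ) * (k.choose i : ℝ) := by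
  have hcast : ((k:ℝ) + 1) * (k.choose i : ℝ) = ((k:ℝ) + 1 - i) * ((k+1).choose i : ℝ) := by
    have := congrArg (fun t : ℕ => (t : ℝ)) (choose_nat_id k i)
    push_cast [Nat.cast_sub h] at this
    linarith [this]
  linear_combination hcast

lemma stirling2_rec (n k : ℕ) :
    stirling2 (n + 1) (k + 1) = stirling2 n k + ((k : ℝ) + 1) * stirling2 n (k + 1) := by
  rw [stirling2_eq, stirling2_eq, stirling2_eq]
  have hext : ∑ i ∈ Finset.range (k+1+1), (k.choose i : ℝ) * (-1)^i * (i:ℝ)^n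
      = ∑ i ∈ Finset.range (k+1), (k.choose i : ℝ) * (-1)^i * (i:ℝ)^n := by
    rw [Finset.sum_range_succ, Nat.choose_succ_self]
    simp
  have key : ∑ i ∈ Finset.range (k+1+1), (((k+1).choose i : ℝ)) * (-1)^i * (i:ℝ)^(n+1)
      = ((k:ℝ)+1) * (∑ i ∈ Finset.range (k+1+1), (((k+1).choose i : ℝ)) * (-1)^i * (i:ℝ)^n)
        - ((k:ℝ)+1) * (∑ i ∈ Finset.range (k+1), ((k.choose i : ℝ)) * (-1)^i * (i:ℝ)^n) := by
    rw [← hext, Finset.mul_sum, Finset.mul_sum, ← Finset.sum_sub_distrib]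
    refine Finset.sum_congr rfl fun i hi => ?_
    have h : i ≤ k + 1 := Nat.lt_succ_iff.mp (Finset.mem_range.mp hi)
    linear_combination ((-1:ℝ)^i * (i:ℝ)^n) * choose_cast_id k i h
  rw [key, Nat.factorial_succ]
  have h1 : ((k.factorial : ℝ)) ≠ 0 := Nat.cast_ne_zero.mpr k.factorial_ne_zero
  have h2 : ((k:ℝ) + 1) ≠ 0 := by positivity
  push_cast
  field_simp
  ring

lemma stirling2_eq_zero : ∀ {n k : ℕ}, n < k → stirling2 n k = 0 := by
  intro n
  induction n with
  | zero =>
    intro k hk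
    obtain ⟨j, rfl⟩ := Nat.exists_eq_add_of_lt hk
    simpa using stirling2_zero_succ (0 + j)
  | succ n ih =>
    intro k hk
    obtain ⟨j, rfl⟩ := Nat.exists_eq_add_of_lt hk
    rw [show n + 1 + j + 1 = (n + j + 1) + 1 from by omega, stirling2_rec,
      ih (by omega : n < n + j + 1), ih (by omega : n < n + j + 1 + 1)]
    ring

def stZ (j : ℕ) (z : ℤ) : ℝ := if 0 ≤ z then stirling2 j z.toNat else 0

lemma stZ_ofNat (j c : ℕ) : stZ j (c : ℤ) = stirling2 j c := by
  simp [stZ]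

lemma stZ_neg {j : ℕ} {z : ℤ} (h : z < 0) : stZ j z = 0 := by
  simp [stZ, not_le.mpr h]

lemma stZ_zero_left (z : ℤ) : stZ 0 z = if z = 0 then 1 else 0 := by
  rcases lt_trichotomy z 0 with h | h | h
  · rw [stZ_neg h, if_neg (by omega)]
  · subst h; simp [stZ, stirling2_zero_zero]
  · obtain ⟨w, rfl⟩ := Int.eq_ofNat_of_zero_le h.le
    have hw : w ≠ 0 := by omega
    obtain ⟨v, rfl⟩ := Nat.exists_eq_succ_of_ne_zero hw
    rw [stZ_ofNat, stirling2_zero_succ, if_neg (by omega)]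

lemma stZ_rec (j : ℕ) (z : ℤ) :
    stZ (j + 1) z = stZ j (z - 1) + (z : ℝ) * stZ j z := by
  rcases lt_trichotomy z 0 with h | h | h
  · rw [stZ_neg h, stZ_neg (by omega : z - 1 < 0), stZ_neg h]; ring
  · subst h
    rw [show ((0:ℤ) - 1) = -1 from by ring, stZ_neg (by omega : (-1:ℤ) < 0)]
    simp [stZ, stirling2_succ_zero]
  · obtain ⟨w, rfl⟩ := Int.eq_ofNat_of_zero_le h.le
    have hw : w ≠ 0 := by omega
    obtain ⟨v, rfl⟩ := Nat.exists_eq_succ_of_ne_zero hw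
    have h1 : ((v + 1 : ℕ) : ℤ) - 1 = (v : ℤ) := by push_cast; ring
    rw [stZ_ofNat, h1, stZ_ofNat, stZ_ofNat, stirling2_rec]
    push_cast
    ring

lemma pascal_sum (m : ℕ) (f : ℕ → ℝ) :
    ∑ j ∈ Finset.range (m + 1 + 1), ((m+1).choose j : ℝ) * f j
      = ∑ j ∈ Finset.range (m + 1), (m.choose j : ℝ) * f j
        + ∑ j ∈ Finset.range (m + 1), (m.choose j : ℝ) * f (j + 1) := by
  rw [Finset.sum_range_succ' (fun j => ((m+1).choose j : ℝ) * f j) (m+1)]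
  have h1 : ∀ j ∈ Finset.range (m+1), ((m+1).choose (j+1) : ℝ) * f (j+1)
      = (m.choose j : ℝ) * f (j+1) + (m.choose (j+1) : ℝ) * f (j+1) := by
    intro j _
    rw [Nat.choose_succ_succ]
    push_cast; ring
  rw [Finset.sum_congr rfl h1, Finset.sum_add_distrib]
  have h4 : ∑ j ∈ Finset.range (m + 1 + 1), ((m.choose j) : ℝ) * f j
      = ∑ j ∈ Finset.range (m+1), (m.choose j : ℝ) * f j := by
    rw [Finset.sum_range_succ, Nat.choose_succ_self]
    simp
  rw [← h4, Finset.sum_range_succ' (fun j => ((m.choose j) : ℝ) * f j) (m+1)]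
  simp only [Nat.choose_zero_right, Nat.cast_one, one_mul]
  ring

lemma lemA (n m : ℕ) : ∀ c : ℤ, stZ (m + n) c
    = ∑ k ∈ Finset.range (n + 1), ∑ j ∈ Finset.range (m + 1),
        (m.choose j : ℝ) * (k : ℝ) ^ (m - j) * stirling2 n k * stZ j (c - k) := by
  induction m with
  | zero =>
    intro c
    simp only [Finset.sum_range_one, Nat.choose_self, Nat.cast_one, Nat.sub_self, pow_zero,
      one_mul, stZ_zero_left, Nat.zero_add]
    by_cases h0 : 0 ≤ c
    · lift c to ℕ using h0 with c0
      by_cases hc : c0 ≤ n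
      · rw [Finset.sum_eq_single c0]
        · rw [stZ_ofNat, if_pos (by omega), mul_one]
        · intro k _ hk
          rw [if_neg (by omega), mul_zero]
        · intro hc0
          exact absurd (Finset.mem_range.mpr (by omega)) hc0
      · rw [stZ_ofNat, stirling2_eq_zero (by omega : n < c0), Finset.sum_eq_zero]
        intro k hk
        have : k ≤ n := Nat.lt_succ_iff.mp (Finset.mem_range.mp hk)
        rw [if_neg (by omega), mul_zero]
    · rw [stZ_neg (by omega), Finset.sum_eq_zero]
      intro k _
      rw [if_neg (by omega), mul_zero]
  | succ m ih =>
    intro c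
    have hk : ∀ k ∈ Finset.range (n + 1),
        ∑ j ∈ Finset.range (m + 1 + 1),
            ((m+1).choose j : ℝ) * (k : ℝ) ^ (m + 1 - j) * stirling2 n k * stZ j (c - k)
        = (∑ j ∈ Finset.range (m + 1),
            (m.choose j : ℝ) * (k : ℝ) ^ (m - j) * stirling2 n k * stZ j ((c - 1) - k))
          + (c : ℝ) * ∑ j ∈ Finset.range (m + 1),
            (m.choose j : ℝ) * (k : ℝ) ^ (m - j) * stirling2 n k * stZ j (c - k) := by
      intro k _
      have hps := pascal_sum m
        (fun j => (k : ℝ) ^ (m + 1 - j) * stirling2 n k * stZ j (c - k))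
      simp only [← mul_assoc] at hps
      rw [hps]
      rw [Finset.mul_sum, ← Finset.sum_add_distrib, ← Finset.sum_add_distrib]
      refine Finset.sum_congr rfl fun j hj => ?_
      have hjm : j ≤ m := Nat.lt_succ_iff.mp (Finset.mem_range.mp hj)
      have hpow : (k : ℝ) ^ (m + 1 - j) = (k : ℝ) ^ (m - j) * k := by
        rw [show m + 1 - j = (m - j) + 1 from by omega, pow_succ]
      have hpow2 : m + 1 - (j + 1) = m - j := by omega
      have hrec := stZ_rec j ((c : ℤ) - k)
      have hsub : (c : ℤ) - k - 1 = (c - 1) - k := by ring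
      rw [hpow, hpow2, hrec, hsub]
      push_cast
      ring
    rw [Finset.sum_congr rfl hk, Finset.sum_add_distrib, ← Finset.mul_sum,
      ← ih (c - 1), ← ih c,
      show m + 1 + n = (m + n) + 1 from by omega, stZ_rec]

lemma fallFac_add (x : ℝ) (k r : ℕ) :
    fallFac x (k + r) = fallFac x k * fallFac (x - k) r := by
  rw [fallFac, fallFac, fallFac, Finset.prod_range_add]
  congr 1
  refine Finset.prod_congr rfl fun i _ => ?_
  push_cast
  ring

lemma phi_ext (j t : ℕ) (h : j + 1 ≤ t) (z y : ℝ) :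
    ∑ r ∈ Finset.range t, stirling2 j r * fallFac z r * y ^ r = phiBiv j z y := by
  rw [phiBiv]
  refine (Finset.sum_subset (Finset.range_subset_range.mpr h) fun r _ hr => ?_).symm
  rw [stirling2_eq_zero (by simpa using Finset.mem_range.not.mp hr), zero_mul, zero_mul]

lemma innerSumAux (m n k j : ℕ) (hk : k ≤ n) (hj : j ≤ m) (x y : ℝ) :
    ∑ c ∈ Finset.range (m + n + 1), stZ j ((c : ℤ) - k) * fallFac x c * y ^ c
      = phiBiv j (x - k) y * fallFac x k * y ^ k := by
  have hN : m + n + 1 = k + (m + n + 1 - k) := by omega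
  rw [hN, Finset.sum_range_add]
  have h1 : ∑ c ∈ Finset.range k, stZ j ((c : ℤ) - k) * fallFac x c * y ^ c = 0 := by
    refine Finset.sum_eq_zero fun c hc => ?_
    have : c < k := Finset.mem_range.mp hc
    rw [stZ_neg (by omega), zero_mul, zero_mul]
  rw [h1, zero_add]
  have h2 : ∀ r ∈ Finset.range (m + n + 1 - k),
      stZ j ((↑(k + r) : ℤ) - k) * fallFac x (k + r) * y ^ (k + r)
        = (stirling2 j r * fallFac (x - k) r * y ^ r) * (fallFac x k * y ^ k) := by
    intro r _
    have hz : ((↑(k + r) : ℤ) - k) = (r : ℤ) := by push_cast; ring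
    rw [hz, stZ_ofNat, fallFac_add, pow_add]
    ring
  rw [Finset.sum_congr rfl h2, ← Finset.sum_mul, phi_ext j _ (by omega)]
  ring

theorem bivBell_recurrence (m n : ℕ) (x y : ℝ) :
    phiBiv (m + n) x y =
      ∑ k ∈ Finset.range (n + 1), ∑ j ∈ Finset.range (m + 1),
        (m.choose j : ℝ) * phiBiv j (x - (k : ℝ)) y * fallFac x k * y ^ k *
          stirling2 n k * (k : ℝ) ^ (m - j) := by
  rw [phiBiv]
  have h1 : ∀ c ∈ Finset.range (m + n + 1),
      stirling2 (m + n) c * fallFac x c * y ^ c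
        = ∑ k ∈ Finset.range (n + 1), ∑ j ∈ Finset.range (m + 1),
            (m.choose j : ℝ) * (k : ℝ) ^ (m - j) * stirling2 n k
              * (stZ j ((c : ℤ) - k) * fallFac x c * y ^ c) := by
    intro c _
    rw [← stZ_ofNat, lemA n m (c : ℤ), Finset.sum_mul, Finset.sum_mul]
    refine Finset.sum_congr rfl fun k _ => ?_
    rw [Finset.sum_mul, Finset.sum_mul]
    refine Finset.sum_congr rfl fun j _ => by ring
  rw [Finset.sum_congr rfl h1, Finset.sum_comm]
  refine Finset.sum_congr rfl fun k hk => ?_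
  rw [Finset.sum_comm]
  refine Finset.sum_congr rfl fun j hj => ?_
  rw [← Finset.mul_sum,
    innerSumAux m n k j (Nat.lt_succ_iff.mp (Finset.mem_range.mp hk))
      (Nat.lt_succ_iff.mp (Finset.mem_range.mp hj)) x y]
  ring

end
end

section
/- For all nonnegative integers m and n and all real x, the r-Bell polynomials satisfy φ_{m+n,r}(x) = Σ_{i=0}^{n} Σ_{k=0}^{m} C(n,i) · x^k · φ_i(x) · {m+r brace k+r}_r · (k+r)^{n−i}, where φ_i denotes the Bell polynomial and {m+r brace k+r}_r the r-Stirling number of the second kind. -/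
open Finset

noncomputable section

/-- The r-Stirling numbers of the second kind
`{n+r brace k+r}_r = (1/k!) ∑_{j=0}^{k} C(k,j) (−1)^{k−j} (j+r)^n`. -/
def rStirling2 (r n k : ℕ) : ℝ :=
  ((k.factorial : ℝ))⁻¹ *
    ∑ j ∈ Finset.range (k + 1), (k.choose j : ℝ) * (-1) ^ (k - j) * ((j : ℝ) + r) ^ n

/-- The Bell polynomials `φ_n(x) = ∑_{k=0}^{n} {n brace k} x^k`. -/
def phiBell (n : ℕ) (x : ℝ) : ℝ :=
  ∑ k ∈ Finset.range (n + 1), stirling2 n k * x ^ k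

/-- The r-Bell polynomials `φ_{n,r}(x) = ∑_{k=0}^{n} {n+r brace k+r}_r x^k`. -/
def phiRBell (r n : ℕ) (x : ℝ) : ℝ :=
  ∑ k ∈ Finset.range (n + 1), rStirling2 r n k * x ^ k


lemma myFwdDiff_comp_add (f : ℝ → ℝ) (c : ℝ) :
    fwdDiff (1:ℝ) (fun t => f (t + c)) = fun t => fwdDiff (1:ℝ) f (t + c) := by
  funext t
  simp only [fwdDiff]
  ring_nf

lemma myFwdDiff_iter_comp_add (f : ℝ → ℝ) (c : ℝ) (k : ℕ) :
    (fwdDiff (1:ℝ))^[k] (fun t => f (t + c)) = fun t => (fwdDiff (1:ℝ))^[k] f (t + c) := by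
  induction k generalizing f with
  | zero => simp
  | succ k ih =>
    rw [Function.iterate_succ_apply, Function.iterate_succ_apply,
      myFwdDiff_comp_add, ih]

lemma vanish (m : ℕ) : ∀ k, m < k → ∀ (c : ℝ),
    (fwdDiff (1:ℝ))^[k] (fun s : ℝ => (s + c) ^ m) = fun _ => 0 := by
  induction m using Nat.strong_induction_on with
  | _ m IH =>
    intro k hk c
    obtain ⟨k, rfl⟩ : ∃ k', k = k' + 1 :=
      ⟨k - 1, (Nat.succ_pred_eq_of_pos (Nat.pos_of_ne_zero (by omega))).symm⟩
    have hmk : m ≤ k := Nat.lt_succ_iff.mp hk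
    have hΔ : fwdDiff (1:ℝ) (fun s : ℝ => (s + c) ^ m)
        = ∑ i ∈ range m, ((m.choose i : ℝ) • fun t : ℝ => (t + c) ^ i) := by
      funext t
      simp only [fwdDiff, Finset.sum_apply, Pi.smul_apply, smul_eq_mul]
      have h1 : (t + 1 + c) = (t + c) + 1 := by ring
      rw [h1, add_pow, Finset.sum_range_succ]
      simp [mul_comm]
    rw [Function.iterate_succ_apply, hΔ, fwdDiff_iter_finset_sum]
    funext t
    rw [Finset.sum_apply]
    refine Finset.sum_eq_zero fun i hi => ?_
    rw [fwdDiff_iter_const_smul, IH i (Finset.mem_range.mp hi) k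
      (lt_of_lt_of_le (Finset.mem_range.mp hi) hmk) c]
    simp

lemma sumDk (m k : ℕ) (y : ℝ) :
    ∑ j ∈ range (k + 1), (k.choose j : ℝ) * (-1) ^ (k - j) * ((j : ℝ) + y) ^ m
      = (fwdDiff (1:ℝ))^[k] (fun t : ℝ => (t + y) ^ m) 0 := by
  rw [fwdDiff_iter_eq_sum_shift]
  refine Finset.sum_congr rfl fun j hj => ?_
  have : ((0:ℝ) + j • (1:ℝ) + y) = (j : ℝ) + y := by
    simp [nsmul_eq_mul]
  rw [this, zsmul_eq_mul]
  push_cast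
  ring
lemma iter_pow_shift (m k : ℕ) (y c : ℝ) :
    (fwdDiff (1:ℝ))^[k] (fun t : ℝ => (t + y) ^ m) c
      = (fwdDiff (1:ℝ))^[k] (fun t : ℝ => (t + (y + c)) ^ m) 0 := by
  have h := congrFun (myFwdDiff_iter_comp_add (fun s : ℝ => (s + y) ^ m) c k) 0
  have h2 : (fun t : ℝ => (fun s : ℝ => (s + y) ^ m) (t + c)) = fun t : ℝ => (t + (y + c)) ^ m := by
    funext t
    show ((t + c) + y) ^ m = (t + (y + c)) ^ m
    ring_nf
  rw [h2, zero_add] at h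
  exact h.symm

noncomputable def Sgen (m k : ℕ) (y : ℝ) : ℝ :=
  ((k.factorial : ℝ))⁻¹ *
    ∑ j ∈ Finset.range (k + 1), (k.choose j : ℝ) * (-1) ^ (k - j) * ((j : ℝ) + y) ^ m

lemma Sgen_eq (m k : ℕ) (y : ℝ) :
    Sgen m k y = ((k.factorial : ℝ))⁻¹ * (fwdDiff (1:ℝ))^[k] (fun t : ℝ => (t + y) ^ m) 0 := by
  rw [Sgen, sumDk]

lemma Sgen_vanish (m k : ℕ) (h : m < k) (y : ℝ) : Sgen m k y = 0 := by
  rw [Sgen_eq, vanish m k h y]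
  simp

lemma Sgen_shift (m k : ℕ) (y : ℝ) :
    Sgen m k (y + 1) = Sgen m k y + ((k:ℝ) + 1) * Sgen m (k + 1) y := by
  rw [Sgen_eq, Sgen_eq, Sgen_eq, ← iter_pow_shift m k y 1]
  have h2 : (fwdDiff (1:ℝ))^[k] (fun t : ℝ => (t + y) ^ m) 1
      = (fwdDiff (1:ℝ))^[k + 1] (fun t : ℝ => (t + y) ^ m) 0
        + (fwdDiff (1:ℝ))^[k] (fun t : ℝ => (t + y) ^ m) 0 := by
    rw [Function.iterate_succ_apply']
    simp [fwdDiff]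
  rw [h2]
  have hf : (((k + 1).factorial : ℝ)) = ((k:ℝ) + 1) * (k.factorial : ℝ) := by
    rw [Nat.factorial_succ]; push_cast; ring
  have h0 : (k.factorial : ℝ) ≠ 0 := Nat.cast_ne_zero.mpr (Nat.factorial_ne_zero k)
  rw [hf]
  field_simp
  ring

lemma leib (y : ℝ) : ∀ (k : ℕ) (g : ℝ → ℝ) (t : ℝ),
    (fwdDiff (1:ℝ))^[k + 1] (fun s => (s + y) * g s) t
      = (t + y) * (fwdDiff (1:ℝ))^[k + 1] g t + ((k:ℝ) + 1) * (fwdDiff (1:ℝ))^[k] g (t + 1) := by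
  intro k
  induction k with
  | zero =>
    intro g t
    rw [zero_add, Function.iterate_one, Function.iterate_zero]
    simp only [fwdDiff, id_eq, Nat.cast_zero]
    ring
  | succ k ih =>
    intro g t
    rw [Function.iterate_succ_apply]
    have hd : fwdDiff (1:ℝ) (fun s => (s + y) * g s)
        = (fun s => (s + y) * fwdDiff (1:ℝ) g s) + (fwdDiff (1:ℝ) g + g) := by
      funext s
      simp only [fwdDiff, Pi.add_apply]
      ring
    rw [hd, fwdDiff_iter_add, fwdDiff_iter_add, Pi.add_apply, Pi.add_apply, ih (fwdDiff (1:ℝ) g) t]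
    have e1 : (fwdDiff (1:ℝ))^[k + 1] (fwdDiff (1:ℝ) g) t
        = (fwdDiff (1:ℝ))^[k + 1] g (t + 1) - (fwdDiff (1:ℝ))^[k + 1] g t := by
      rw [← Function.iterate_succ_apply, Function.iterate_succ_apply']
      simp [fwdDiff]
    have e2 : (fwdDiff (1:ℝ))^[k] (fwdDiff (1:ℝ) g) (t + 1)
        = (fwdDiff (1:ℝ))^[k + 1] g (t + 1) := by
      rw [← Function.iterate_succ_apply]
    have e3 : (fwdDiff (1:ℝ))^[k + 1 + 1] g t
        = (fwdDiff (1:ℝ))^[k + 1] g (t + 1) - (fwdDiff (1:ℝ))^[k + 1] g t := by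
      rw [← e1, ← Function.iterate_succ_apply]
    rw [e2, e1, e3]
    push_cast
    ring

lemma Sgen_rec_succ (m k : ℕ) (y : ℝ) :
    Sgen (m + 1) (k + 1) y = y * Sgen m (k + 1) y + Sgen m k (y + 1) := by
  rw [Sgen_eq, Sgen_eq, Sgen_eq]
  have h1 : (fun t : ℝ => (t + y) ^ (m + 1))
      = fun t : ℝ => (t + y) * (fun s : ℝ => (s + y) ^ m) t := by
    funext t; ring
  rw [h1, leib, zero_add, zero_add, iter_pow_shift m k y 1]
  have hf : (((k + 1).factorial : ℝ)) = ((k:ℝ) + 1) * (k.factorial : ℝ) := by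
    rw [Nat.factorial_succ]; push_cast; ring
  have h0 : (k.factorial : ℝ) ≠ 0 := Nat.cast_ne_zero.mpr (Nat.factorial_ne_zero k)
  have hk1 : ((k:ℝ) + 1) ≠ 0 := by positivity
  rw [hf]
  field_simp

lemma Sgen_zero_k (m : ℕ) (y : ℝ) : Sgen m 0 y = y ^ m := by
  simp [Sgen]

lemma Sgen_rec_zero (m : ℕ) (y : ℝ) : Sgen (m + 1) 0 y = y * Sgen m 0 y := by
  rw [Sgen_zero_k, Sgen_zero_k, pow_succ]
  ring
noncomputable def Pgen (n : ℕ) (y x : ℝ) : ℝ :=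
  ∑ k ∈ Finset.range (n + 1), Sgen n k y * x ^ k

lemma Pgen_zero (y x : ℝ) : Pgen 0 y x = 1 := by
  simp [Pgen, Sgen]

lemma Pgen_rec (n : ℕ) (y x : ℝ) :
    Pgen (n + 1) y x = y * Pgen n y x + x * Pgen n (y + 1) x := by
  have h1 : Pgen (n + 1) y x
      = ∑ k ∈ Finset.range (n + 1), Sgen (n + 1) (k + 1) y * x ^ (k + 1)
        + Sgen (n + 1) 0 y * x ^ 0 :=
    Finset.sum_range_succ' _ (n + 1)
  rw [h1]
  simp only [Sgen_rec_succ, Sgen_rec_zero, add_mul]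
  rw [Finset.sum_add_distrib]
  have h2 : ∑ k ∈ Finset.range (n + 1), y * Sgen n (k + 1) y * x ^ (k + 1)
        + y * Sgen n 0 y * x ^ 0
      = y * Pgen n y x := by
    have h3 : Pgen n y x = ∑ k ∈ Finset.range (n + 2), Sgen n k y * x ^ k := by
      rw [Finset.sum_range_succ, Sgen_vanish n (n + 1) (Nat.lt_succ_self n) y]
      simp [Pgen]
    rw [h3, Finset.sum_range_succ' _ (n + 1), mul_add, Finset.mul_sum]
    congr 1
    · exact Finset.sum_congr rfl fun k _ => by ring
    · ring
  have h4 : ∑ k ∈ Finset.range (n + 1), Sgen n k (y + 1) * x ^ (k + 1)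
      = x * Pgen n (y + 1) x := by
    rw [Pgen, Finset.mul_sum]
    refine Finset.sum_congr rfl fun k _ => ?_
    ring
  rw [h4, ← h2]
  ring

lemma main_ind (m : ℕ) (x : ℝ) : ∀ (n : ℕ) (y : ℝ),
    Pgen (m + n) y x
      = ∑ k ∈ Finset.range (m + 1), Sgen m k y * x ^ k * Pgen n ((k : ℝ) + y) x := by
  intro n
  induction n with
  | zero =>
    intro y
    simp only [Nat.add_zero, Pgen_zero, mul_one]
    rfl
  | succ n ih =>
    intro y
    have key : x * ∑ k ∈ Finset.range (m + 1),
          ((k : ℝ) + 1) * Sgen m (k + 1) y * x ^ k * Pgen n ((k : ℝ) + y + 1) x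
        = ∑ k ∈ Finset.range (m + 1), (k : ℝ) * Sgen m k y * x ^ k * Pgen n ((k : ℝ) + y) x := by
      have h1 := Finset.sum_range_succ'
        (fun k => (k : ℝ) * Sgen m k y * x ^ k * Pgen n ((k : ℝ) + y) x) (m + 1)
      have h2 := Finset.sum_range_succ
        (fun k => (k : ℝ) * Sgen m k y * x ^ k * Pgen n ((k : ℝ) + y) x) (m + 1)
      rw [Sgen_vanish m (m + 1) (Nat.lt_succ_self m) y] at h2
      simp only [Nat.cast_zero, zero_mul, mul_zero, zero_add, pow_zero, mul_one, add_zero] at h1 h2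
      have hstep : x * ∑ k ∈ Finset.range (m + 1),
            ((k : ℝ) + 1) * Sgen m (k + 1) y * x ^ k * Pgen n ((k : ℝ) + y + 1) x
          = ∑ k ∈ Finset.range (m + 1),
            ((k + 1 : ℕ) : ℝ) * Sgen m (k + 1) y * x ^ (k + 1) * Pgen n (((k + 1 : ℕ) : ℝ) + y) x := by
        rw [Finset.mul_sum]
        refine Finset.sum_congr rfl fun k _ => ?_
        push_cast
        ring
      rw [hstep, ← h1, h2]
    rw [show m + (n + 1) = (m + n) + 1 from rfl, Pgen_rec, ih y, ih (y + 1)]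
    simp only [Pgen_rec, Sgen_shift]
    have hsplit : ∑ k ∈ Finset.range (m + 1),
          (Sgen m k y + ((k : ℝ) + 1) * Sgen m (k + 1) y) * x ^ k * Pgen n ((k : ℝ) + (y + 1)) x
        = (∑ k ∈ Finset.range (m + 1), Sgen m k y * x ^ k * Pgen n ((k : ℝ) + y + 1) x)
          + ∑ k ∈ Finset.range (m + 1),
            ((k : ℝ) + 1) * Sgen m (k + 1) y * x ^ k * Pgen n ((k : ℝ) + y + 1) x := by
      rw [← Finset.sum_add_distrib]
      refine Finset.sum_congr rfl fun k _ => ?_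
      rw [show (k : ℝ) + (y + 1) = (k : ℝ) + y + 1 by ring]
      ring
    have hR : ∑ k ∈ Finset.range (m + 1),
          Sgen m k y * x ^ k * (((k : ℝ) + y) * Pgen n ((k : ℝ) + y) x + x * Pgen n ((k : ℝ) + y + 1) x)
        = (∑ k ∈ Finset.range (m + 1), (k : ℝ) * Sgen m k y * x ^ k * Pgen n ((k : ℝ) + y) x)
          + (y * ∑ k ∈ Finset.range (m + 1), Sgen m k y * x ^ k * Pgen n ((k : ℝ) + y) x
            + x * ∑ k ∈ Finset.range (m + 1), Sgen m k y * x ^ k * Pgen n ((k : ℝ) + y + 1) x) := by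
      rw [Finset.mul_sum, Finset.mul_sum, ← Finset.sum_add_distrib, ← Finset.sum_add_distrib]
      refine Finset.sum_congr rfl fun k _ => ?_
      ring
    rw [hsplit, hR]
    linear_combination key
lemma stirling2_eq_Sgen (n k : ℕ) : stirling2 n k = Sgen n k 0 := by
  simp [stirling2, Sgen]

lemma H_eq_P (n : ℕ) (y x : ℝ) :
    ∑ i ∈ Finset.range (n + 1), (n.choose i : ℝ) * phiBell i x * y ^ (n - i) = Pgen n y x := by
  have hphi : ∀ i ∈ Finset.range (n + 1), (n.choose i : ℝ) * phiBell i x * y ^ (n - i)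
      = ∑ k ∈ Finset.range (n + 1),
          (n.choose i : ℝ) * y ^ (n - i) * (Sgen i k 0 * x ^ k) := by
    intro i hi
    have hiext : phiBell i x = ∑ k ∈ Finset.range (n + 1), Sgen i k 0 * x ^ k := by
      rw [phiBell]
      rw [Finset.sum_congr rfl (fun k _ => by rw [stirling2_eq_Sgen])]
      refine Finset.sum_subset (Finset.range_subset_range.mpr ?_) ?_
      · exact Nat.succ_le_succ (Nat.lt_succ_iff.mp (Finset.mem_range.mp hi))
      · intro k _ hk
        rw [Sgen_vanish i k (by simpa using Finset.mem_range.not.mp hk) 0, zero_mul]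
    rw [hiext, Finset.mul_sum, Finset.sum_mul]
    exact Finset.sum_congr rfl fun k _ => by ring
  rw [Finset.sum_congr rfl hphi, Finset.sum_comm, Pgen]
  refine Finset.sum_congr rfl fun k _ => ?_
  have hx : ∀ i ∈ Finset.range (n + 1),
      (n.choose i : ℝ) * y ^ (n - i) * (Sgen i k 0 * x ^ k)
        = ((n.choose i : ℝ) * y ^ (n - i) * Sgen i k 0) * x ^ k := fun i _ => by ring
  rw [Finset.sum_congr rfl hx, ← Finset.sum_mul]
  congr 1
  rw [Sgen]
  have hexp : ∀ j ∈ Finset.range (k + 1),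
      (k.choose j : ℝ) * (-1) ^ (k - j) * ((j : ℝ) + y) ^ n
        = ∑ i ∈ Finset.range (n + 1),
            (k.choose j : ℝ) * (-1) ^ (k - j) * ((j : ℝ) ^ i * y ^ (n - i) * (n.choose i : ℝ)) := by
    intro j _
    rw [add_pow, Finset.mul_sum]
  rw [Finset.sum_congr rfl hexp, Finset.sum_comm, Finset.mul_sum]
  refine Finset.sum_congr rfl fun i _ => ?_
  rw [Sgen, Finset.mul_sum, Finset.mul_sum]
  rw [Finset.mul_sum]
  refine Finset.sum_congr rfl fun j _ => ?_
  rw [add_zero]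
  ring

theorem rBell_recurrence_via_Bell (r : ℕ) (hr : 0 < r) (m n : ℕ) (x : ℝ) :
    phiRBell r (m + n) x =
      ∑ i ∈ Finset.range (n + 1), ∑ k ∈ Finset.range (m + 1),
        (n.choose i : ℝ) * x ^ k * phiBell i x * rStirling2 r m k *
          ((k : ℝ) + r) ^ (n - i) := by
  have hS : ∀ N k, rStirling2 r N k = Sgen N k (r : ℝ) := fun N k => rfl
  have hP : phiRBell r (m + n) x = Pgen (m + n) (r : ℝ) x := rfl
  rw [hP, main_ind m x n (r : ℝ), Finset.sum_comm]
  refine Finset.sum_congr rfl fun k _ => ?_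
  rw [← H_eq_P n ((k : ℝ) + (r : ℝ)) x, Finset.mul_sum]
  refine Finset.sum_congr rfl fun i _ => ?_
  rw [hS]
  ring

end
end
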